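/- Let d, n, m ≥ 1 and θ₀ = 2π/(n+1). For k ∈ {0,…,n}^d let |φ_k⟩ = (1/√d)Σ_{i=1}^d e^{iθ₀k_i}|i⟩. Then (1/(n+1)^d) Σ_{k∈{0,…,n}^d} (|φ_k⟩⟨φ_k|)^{⊗m} = Σ_ν d_ν |φ_ν⟩⟨φ_ν|, where ν runs over residue classes in (ℤ/(n+1))^d containing some occupation vector β ∈ ℕ^d with Σ_i β_i = m and β ≡ ν componentwise mod (n+1), d_ν = Σ_{β≡ν, Σβ=m} m!/(d^m β!), the vectors |φ_ν⟩ = (1/√(d^m d_ν)) Σ_{β≡ν, Σβ=m} √(m!/β!) |β⟩ are unit vectors, and distinct |φ_ν⟩ are orthogonal. -/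

import Mathlib

open Matrix MeasureTheory
open scoped Kronecker ComplexOrder

noncomputable section

/-- The positive semidefinite square root of a matrix (junk value `0` if not PSD). -/
def matSqrt {ι : Type*} [Fintype ι] [DecidableEq ι] (A : Matrix ι ι ℂ) : Matrix ι ι ℂ :=
  open Classical in if h : A.PosSemidef then
    (h.1.eigenvectorUnitary : Matrix ι ι ℂ) * diagonal ((↑) ∘ Real.sqrt ∘ h.1.eigenvalues) *
      (star h.1.eigenvectorUnitary : Matrix ι ι ℂ) else 0

/-- The matrix absolute value `|X| = √(XᴴX)`. -/
def matAbs {ι : Type*} [Fintype ι] [DecidableEq ι] (X : Matrix ι ι ℂ) : Matrix ι ι ℂ :=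
  matSqrt (Xᴴ * X)

/-- Uhlmann fidelity `F(ρ,σ) = (Tr|√ρ√σ|)²`. -/
def fid {ι : Type*} [Fintype ι] [DecidableEq ι] (ρ σ : Matrix ι ι ℂ) : ℝ :=
  ((matAbs (matSqrt ρ * matSqrt σ)).trace).re ^ 2

/-- A density matrix: positive semidefinite with unit trace. -/
def IsDensity {ι : Type*} [Fintype ι] [DecidableEq ι] (ρ : Matrix ι ι ℂ) : Prop :=
  ρ.PosSemidef ∧ ρ.trace = 1

/-- The rank-one projector `|ψ⟩⟨ψ|`. -/
def ketbra {ι : Type*} (ψ : ι → ℂ) : Matrix ι ι ℂ := Matrix.vecMulVec ψ (star ψ)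

/-- The `l`-fold tensor power of a matrix on `ℂ^d`, acting on `(ℂ^d)^{⊗l}`. -/
def tpow {d : ℕ} (M : Matrix (Fin d) (Fin d) ℂ) (l : ℕ) :
    Matrix (Fin l → Fin d) (Fin l → Fin d) ℂ :=
  Matrix.of fun f g => ∏ i, M (f i) (g i)

/-- Loewner order: `A ⪯ B` iff `B - A` is positive semidefinite. -/
def loewnerLE {ι : Type*} [Fintype ι] (A B : Matrix ι ι ℂ) : Prop := (B - A).PosSemidef

/-- Projector onto the symmetric subspace of `(ℂ^d)^{⊗l}`:
`(1/l!) Σ_{π ∈ S_l} U_π` where `U_π` permutes the tensor factors. -/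
def symProj (d l : ℕ) : Matrix (Fin l → Fin d) (Fin l → Fin d) ℂ :=
  (l.factorial : ℂ)⁻¹ •
    ∑ π : Equiv.Perm (Fin l), Matrix.of fun f g => if f = (fun i => g (π i)) then (1 : ℂ) else 0


/-- Occupation numbers of a product basis index `f` of `(ℂ^d)^{⊗l}`. -/
def occ {d l : ℕ} (f : Fin l → Fin d) : Fin d → ℕ :=
  fun i => (Finset.univ.filter fun j => f j = i).card

/-- Normalized occupation-number basis vector `|α⟩` of the symmetric subspace:
the normalized symmetrization of the product vector with `α i` factors `|i⟩`. -/
def occKet (d l : ℕ) (α : Fin d → ℕ) : (Fin l → Fin d) → ℂ := fun f =>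
  if occ f = α then
    ((Real.sqrt ((∏ i, ((α i).factorial : ℝ)) / (l.factorial : ℝ)) : ℝ) : ℂ) else 0

/-- Multi-phase state `|φ_θ⟩ = (1/√d) Σᵢ e^{iθᵢ}|i⟩`. -/
def phaseState (d : ℕ) (θ : Fin d → ℝ) : Fin d → ℂ :=
  fun i => ((Real.sqrt d : ℝ) : ℂ)⁻¹ * Complex.exp (Complex.I * (θ i : ℂ))

/-- Discretized multi-phase state `|φ_k⟩` with phases multiples of `θ₀ = 2π/(n+1)`. -/
def phaseKet (d n : ℕ) (k : Fin d → Fin (n + 1)) : Fin d → ℂ :=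
  phaseState d (fun i => 2 * Real.pi / (n + 1) * (k i : ℕ))


/-!
With `ζ = e^{2πi/(n+1)}`, the `(f, g)` entry of `(|φ_k⟩⟨φ_k|)^{⊗m}` is
`d^{-m} ∏_i ζ^{k_i (occ f i - occ g i)}`, so averaging over `k`, orthogonality of the characters
of `ℤ/(n+1)` leaves `d^{-m}` times the indicator that the occupation vectors of `f` and `g` agree
mod `n+1`. This is `d^{-m} Σ_ν |1_ν⟩⟨1_ν|`, where `1_ν` indicates the basis indices whose
occupation vector reduces to `ν`. Since `√(m!/β!) |β⟩` indicates the indices with occupation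
vector `β`, `|φ_ν⟩` is `1_ν` rescaled; and as exactly `m!/β!` indices have occupation vector `β`,
`‖1_ν‖² = d^m d_ν`, which gives both the normalisation and the weights.
-/

open Finset

section Occupation

variable {d l : ℕ}

lemma sum_occ (f : Fin l → Fin d) : ∑ i, occ f i = l := by
  simpa [occ] using
    (card_eq_sum_card_fiberwise (s := univ) (f := f) (t := univ) fun _ _ ↦ mem_univ _).symm

lemma occ_lt_succ (f : Fin l → Fin d) (i : Fin d) : occ f i < l + 1 :=
  Nat.lt_succ_of_le ((single_le_sum (fun _ _ ↦ Nat.zero_le _) (mem_univ i)).trans (sum_occ f).le)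

lemma prod_comp_eq_prod_pow_occ {M : Type*} [CommMonoid M] (f : Fin l → Fin d) (E : Fin d → M) :
    ∏ j, E (f j) = ∏ i, E i ^ occ f i := by
  rw [← prod_fiberwise_of_maps_to (g := f) (fun j _ ↦ mem_univ (f j))]
  refine prod_congr rfl fun i _ ↦ ?_
  rw [prod_congr rfl fun j hj ↦ by rw [(mem_filter.mp hj).2], prod_const]
  rfl

/- Both sides are the coefficient of `X^α` in `(X_1 + ⋯ + X_d)^l`: expanding the product
`∏_{j < l} (X_1 + ⋯ + X_d)` gives one monomial `X^{occ f}` for each `f : Fin l → Fin d`. -/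
open MvPolynomial in
lemma card_occ_eq_multinomial (α : Fin d → ℕ) (hα : ∑ i, α i = l) :
    #{f : Fin l → Fin d | occ f = α} = Nat.multinomial univ α := by
  set a := Finsupp.equivFunOnFinite.symm α
  have hmonomial : ∀ f : Fin l → Fin d, ∏ j, (X (f j) : MvPolynomial (Fin d) ℕ) =
      monomial (Finsupp.equivFunOnFinite.symm (occ f)) 1 := by
    intro f
    rw [prod_comp_eq_prod_pow_occ, monomial_eq, C_1, one_mul, Finsupp.prod_fintype _ _ (by simp)]
    rfl
  have hexpand : (∑ i, X i : MvPolynomial (Fin d) ℕ) ^ l =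
      ∑ f : Fin l → Fin d, monomial (Finsupp.equivFunOnFinite.symm (occ f)) 1 := by
    rw [← Fin.prod_const, prod_univ_sum]
    simp only [hmonomial]
    rfl
  have hsum : (a.sum fun _ k ↦ k) = l := by
    rw [Finsupp.sum_fintype _ _ fun _ ↦ rfl]
    exact hα
  have hcoeff := coeff_sum_X_pow_of_fintype (R := ℕ) a l
  rw [hexpand, coeff_sum] at hcoeff
  simp only [coeff_monomial, a, Equiv.apply_eq_iff_eq, sum_boole, hsum, if_true,
    Nat.cast_id] at hcoeff
  rw [hcoeff, Finsupp.multinomial_eq_of_support_subset (subset_univ _)]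
  rfl

lemma cast_card_occ_eq_div (α : Fin d → ℕ) (hα : ∑ i, α i = l) :
    (#{f : Fin l → Fin d | occ f = α} : ℝ) = l.factorial / ∏ i, ((α i).factorial : ℝ) := by
  rw [eq_div_iff (by positivity), card_occ_eq_multinomial α hα, ← hα]
  exact_mod_cast (mul_comm _ _).trans (Nat.multinomial_spec univ α)

def occVec (f : Fin l → Fin d) : Fin d → Fin (l + 1) :=
  fun i ↦ ⟨occ f i, occ_lt_succ f i⟩

lemma occ_eq_iff_eq_occVec (f : Fin l → Fin d) (β : Fin d → Fin (l + 1)) :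
    occ f = (fun i ↦ (β i : ℕ)) ↔ β = occVec f := by
  simp [occVec, funext_iff, Fin.ext_iff, eq_comm]

def occMod (n : ℕ) (f : Fin l → Fin d) : Fin d → Fin (n + 1) :=
  fun i ↦ Fin.ofNat (n + 1) (occ f i)

lemma occMod_eq_occMod_iff {n : ℕ} (f g : Fin l → Fin d) :
    occMod n f = occMod n g ↔ ∀ i, occ f i ≡ occ g i [MOD n + 1] := by
  simp [occMod, funext_iff, Fin.ext_iff, Nat.ModEq]

end Occupation

lemma IsPrimitiveRoot.sum_pow_mul_inv_pow {K : Type*} [Field K] {ζ : K} {N : ℕ}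
    (hζ : IsPrimitiveRoot ζ N) (hN : N ≠ 0) (a b : ℕ) :
    ∑ c ∈ range N, (ζ ^ c) ^ a * ((ζ ^ c)⁻¹) ^ b = if a ≡ b [MOD N] then (N : K) else 0 := by
  set ω := ζ ^ a / ζ ^ b
  have hterm : ∀ c : ℕ, (ζ ^ c) ^ a * ((ζ ^ c)⁻¹) ^ b = ω ^ c := fun c ↦ by ring
  have hω : ω = ζ ^ ((a : ℤ) - b) := by
    rw [zpow_sub₀ (hζ.ne_zero hN), zpow_natCast, zpow_natCast]
  have hω_eq_one : ω = 1 ↔ a ≡ b [MOD N] := by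
    rw [hω, hζ.zpow_eq_one_iff_dvd, ← Nat.modEq_iff_dvd, Nat.ModEq.comm]
  simp only [hterm]
  split_ifs with hab
  · simp [hω_eq_one.mpr hab]
  · have hωN : ω ^ N = 1 := by
      rw [← hterm N, hζ.pow_eq_one]
      simp
    rw [geom_sum_eq (mt hω_eq_one.mp hab), hωN, sub_self, zero_div]

def phaseRoot (n : ℕ) : ℂ := Complex.exp (2 * Real.pi * Complex.I / (n + 1))

lemma isPrimitiveRoot_phaseRoot (n : ℕ) : IsPrimitiveRoot (phaseRoot n) (n + 1) := by
  simpa [phaseRoot] using Complex.isPrimitiveRoot_exp (n + 1) n.succ_ne_zero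

lemma star_phaseRoot (n : ℕ) : star (phaseRoot n) = (phaseRoot n)⁻¹ :=
  (Complex.inv_eq_conj <| Complex.norm_eq_one_of_pow_eq_one
    (isPrimitiveRoot_phaseRoot n).pow_eq_one n.succ_ne_zero).symm

lemma phaseKet_apply (d n : ℕ) (k : Fin d → Fin (n + 1)) (i : Fin d) :
    phaseKet d n k i = ((Real.sqrt d : ℝ) : ℂ)⁻¹ * phaseRoot n ^ (k i : ℕ) := by
  rw [phaseKet, phaseState, phaseRoot, ← Complex.exp_nat_mul]
  congr 2
  push_cast
  ring

lemma tpow_ketbra {d : ℕ} (ψ : Fin d → ℂ) (l : ℕ) :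
    tpow (ketbra ψ) l = ketbra (fun f : Fin l → Fin d ↦ ∏ j, ψ (f j)) := by
  ext f g
  simp [tpow, ketbra, vecMulVec_apply, prod_mul_distrib]

lemma ketbra_ofReal_smul {ι : Type*} (c : ℝ) (v : ι → ℂ) :
    ketbra ((c : ℂ) • v) = ((c * c : ℝ) : ℂ) • ketbra v := by
  rw [ketbra, ketbra, star_smul, smul_vecMulVec, vecMulVec_smul, smul_smul, Complex.star_def,
    Complex.conj_ofReal, Complex.ofReal_mul]

section PhaseMixture

variable {d n m : ℕ}

lemma prod_phaseKet_comp (k : Fin d → Fin (n + 1)) (f : Fin m → Fin d) :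
    ∏ j, phaseKet d n k (f j) =
      ((Real.sqrt d : ℝ) : ℂ)⁻¹ ^ m * ∏ i, (phaseRoot n ^ (k i : ℕ)) ^ occ f i := by
  rw [prod_comp_eq_prod_pow_occ f (phaseKet d n k)]
  simp only [phaseKet_apply, mul_pow, prod_mul_distrib, prod_pow_eq_pow_sum, sum_occ]

lemma tpow_ketbra_phaseKet_apply (k : Fin d → Fin (n + 1)) (f g : Fin m → Fin d) :
    tpow (ketbra (phaseKet d n k)) m f g = ((d : ℂ) ^ m)⁻¹ *
      ∏ i, (phaseRoot n ^ (k i : ℕ)) ^ occ f i * ((phaseRoot n ^ (k i : ℕ))⁻¹) ^ occ g i := by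
  have hnorm : ((Real.sqrt d : ℝ) : ℂ)⁻¹ ^ m * star (((Real.sqrt d : ℝ) : ℂ)⁻¹ ^ m) =
      ((d : ℂ) ^ m)⁻¹ := by
    have hreal : (Real.sqrt d)⁻¹ ^ m * (Real.sqrt d)⁻¹ ^ m = ((d : ℝ) ^ m)⁻¹ := by
      rw [← mul_pow, ← mul_inv, Real.mul_self_sqrt (Nat.cast_nonneg d), inv_pow]
    rw [Complex.star_def, ← Complex.ofReal_inv, ← Complex.ofReal_pow, Complex.conj_ofReal,
      ← Complex.ofReal_mul, hreal]
    push_cast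
    rfl
  have hstar : star (∏ i, (phaseRoot n ^ (k i : ℕ)) ^ occ g i) =
      ∏ i, ((phaseRoot n ^ (k i : ℕ))⁻¹) ^ occ g i := by
    simp only [star_prod, star_pow, star_phaseRoot, inv_pow]
  rw [tpow_ketbra, ketbra, vecMulVec_apply, Pi.star_apply, prod_phaseKet_comp, prod_phaseKet_comp,
    star_mul', hstar, prod_mul_distrib, ← hnorm]
  ring

lemma sum_tpow_ketbra_phaseKet_apply (f g : Fin m → Fin d) :
    (∑ k : Fin d → Fin (n + 1), tpow (ketbra (phaseKet d n k)) m) f g =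
      ((d : ℂ) ^ m)⁻¹ * ((n + 1) ^ d * if occMod n f = occMod n g then 1 else 0) := by
  set ζ := phaseRoot n
  calc (∑ k : Fin d → Fin (n + 1), tpow (ketbra (phaseKet d n k)) m) f g
      = ((d : ℂ) ^ m)⁻¹ * ∑ k : Fin d → Fin (n + 1),
          ∏ i, (ζ ^ (k i : ℕ)) ^ occ f i * ((ζ ^ (k i : ℕ))⁻¹) ^ occ g i := by
        simp only [Matrix.sum_apply, tpow_ketbra_phaseKet_apply, mul_sum, ζ]
    _ = ((d : ℂ) ^ m)⁻¹ *
          ∏ i, ∑ c ∈ range (n + 1), (ζ ^ c) ^ occ f i * ((ζ ^ c)⁻¹) ^ occ g i := by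
        simp only [sum_range, Fintype.prod_sum]
    _ = _ := by
        simp only [(isPrimitiveRoot_phaseRoot n).sum_pow_mul_inv_pow n.succ_ne_zero, ζ,
          prod_ite_zero, mem_univ, forall_const, prod_const, card_univ, Fintype.card_fin,
          occMod_eq_occMod_iff, mul_ite, mul_one, mul_zero, Nat.cast_succ]

end PhaseMixture

-- `occClass`, `classWeight` and `classKet` are the `B ν`, `d_ν` and `|φ_ν⟩` of the theorem.
def occClass (d n m : ℕ) (ν : Fin d → Fin (n + 1)) : Finset (Fin d → Fin (m + 1)) :=
  Finset.univ.filter (fun β : Fin d → Fin (m + 1) =>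
    (∑ i, (β i : ℕ)) = m ∧ ∀ i, (β i : ℕ) % (n + 1) = (ν i : ℕ))

def classWeight (d n m : ℕ) (ν : Fin d → Fin (n + 1)) : ℝ :=
  ∑ β ∈ occClass d n m ν,
    (m.factorial : ℝ) / ((d : ℝ) ^ m * ∏ i, ((β i : ℕ).factorial : ℝ))

def classKet (d n m : ℕ) (ν : Fin d → Fin (n + 1)) : (Fin m → Fin d) → ℂ := fun f =>
  (((Real.sqrt ((d : ℝ) ^ m * classWeight d n m ν))⁻¹ : ℝ) : ℂ) * ∑ β ∈ occClass d n m ν,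
    ((Real.sqrt ((m.factorial : ℝ) / ∏ i, ((β i : ℕ).factorial : ℝ)) : ℝ) : ℂ) *
      occKet d m (fun i => (β i : ℕ)) f

def classIndicator (n : ℕ) {d l : ℕ} (ν : Fin d → Fin (n + 1)) : (Fin l → Fin d) → ℂ :=
  fun f ↦ if occMod n f = ν then 1 else 0

section OccupationClasses

variable {d n m : ℕ}

lemma occVec_mem_occClass_iff (f : Fin m → Fin d) (ν : Fin d → Fin (n + 1)) :
    occVec f ∈ occClass d n m ν ↔ occMod n f = ν := by
  simp [occClass, occVec, occMod, sum_occ, funext_iff, Fin.ext_iff]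

lemma sum_occClass_ite_occ_eq (f : Fin m → Fin d) (ν : Fin d → Fin (n + 1)) :
    ∑ β ∈ occClass d n m ν, (if occ f = (fun i ↦ (β i : ℕ)) then (1 : ℂ) else 0) =
      classIndicator n ν f := by
  simp only [occ_eq_iff_eq_occVec, sum_ite_eq', occVec_mem_occClass_iff, classIndicator]

lemma sqrt_mul_occKet {l : ℕ} (α : Fin d → ℕ) (f : Fin l → Fin d) :
    ((Real.sqrt ((l.factorial : ℝ) / ∏ i, ((α i).factorial : ℝ)) : ℝ) : ℂ) * occKet d l α f =
      if occ f = α then 1 else 0 := by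
  unfold occKet
  split_ifs
  · have hcancel : ((l.factorial : ℝ) / ∏ i, ((α i).factorial : ℝ)) *
        ((∏ i, ((α i).factorial : ℝ)) / l.factorial) = 1 := by
      field_simp
    rw [← Complex.ofReal_mul, ← Real.sqrt_mul (by positivity), hcancel, Real.sqrt_one,
      Complex.ofReal_one]
  · rw [mul_zero]

lemma classKet_eq (ν : Fin d → Fin (n + 1)) :
    classKet d n m ν =
      (((Real.sqrt ((d : ℝ) ^ m * classWeight d n m ν))⁻¹ : ℝ) : ℂ) • classIndicator n ν := by
  ext f
  simp only [classKet, sqrt_mul_occKet, sum_occClass_ite_occ_eq, Pi.smul_apply, smul_eq_mul]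

lemma card_occMod_eq_sum_card_occ (ν : Fin d → Fin (n + 1)) :
    #{f : Fin m → Fin d | occMod n f = ν} =
      ∑ β ∈ occClass d n m ν, #{f : Fin m → Fin d | occ f = fun i ↦ (β i : ℕ)} := by
  rw [card_eq_sum_card_fiberwise (f := occVec) (t := occClass d n m ν)
    fun f hf ↦ (occVec_mem_occClass_iff f ν).mpr (mem_filter.mp hf).2]
  refine sum_congr rfl fun β hβ ↦ ?_
  rw [filter_filter]
  refine congrArg card (filter_congr fun f _ ↦ ?_)
  rw [occ_eq_iff_eq_occVec, eq_comm (a := β)]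
  exact and_iff_right_of_imp fun h ↦ (occVec_mem_occClass_iff f ν).mp (h ▸ hβ)

lemma pow_mul_classWeight (hd : 0 < d) (ν : Fin d → Fin (n + 1)) :
    (d : ℝ) ^ m * classWeight d n m ν = #{f : Fin m → Fin d | occMod n f = ν} := by
  rw [classWeight, mul_sum, card_occMod_eq_sum_card_occ, Nat.cast_sum]
  refine sum_congr rfl fun β hβ ↦ ?_
  rw [cast_card_occ_eq_div _ (mem_filter.mp hβ).2.1]
  have : (d : ℝ) ^ m ≠ 0 := by positivity
  field_simp

lemma classWeight_pos (hd : 0 < d) {ν : Fin d → Fin (n + 1)} (hν : (occClass d n m ν).Nonempty) :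
    0 < classWeight d n m ν :=
  sum_pos (fun _ _ ↦ by positivity) hν

lemma star_classIndicator_dotProduct (ν ν' : Fin d → Fin (n + 1)) :
    star (classIndicator (l := m) n ν) ⬝ᵥ classIndicator n ν' =
      if ν = ν' then (#{f : Fin m → Fin d | occMod n f = ν} : ℂ) else 0 := by
  simp only [dotProduct, Pi.star_apply, classIndicator, apply_ite star, star_one, star_zero,
    ite_zero_mul_ite_zero, mul_one]
  split_ifs with h
  · subst h
    simp only [and_self, sum_boole]
  · exact sum_eq_zero fun f _ ↦ if_neg fun ⟨h1, h2⟩ ↦ h (h1.symm.trans h2)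

lemma classKet_dotProduct_of_ne {ν ν' : Fin d → Fin (n + 1)} (h : ν ≠ ν') :
    star (classKet d n m ν) ⬝ᵥ classKet d n m ν' = 0 := by
  rw [classKet_eq, classKet_eq, star_smul, smul_dotProduct, dotProduct_smul,
    star_classIndicator_dotProduct, if_neg h, smul_zero, smul_zero]

lemma classKet_dotProduct_self (hd : 0 < d) {ν : Fin d → Fin (n + 1)}
    (hν : (occClass d n m ν).Nonempty) :
    star (classKet d n m ν) ⬝ᵥ classKet d n m ν = 1 := by
  have hpos : (0 : ℝ) < #{f : Fin m → Fin d | occMod n f = ν} := by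
    rw [← pow_mul_classWeight hd]
    have := classWeight_pos hd hν
    positivity
  rw [classKet_eq, star_smul, smul_dotProduct, dotProduct_smul, star_classIndicator_dotProduct,
    if_pos rfl, Complex.star_def, Complex.conj_ofReal, smul_eq_mul, smul_eq_mul, ← mul_assoc,
    ← Complex.ofReal_mul, ← mul_inv, pow_mul_classWeight hd, Real.mul_self_sqrt hpos.le,
    Complex.ofReal_inv, Complex.ofReal_natCast, inv_mul_cancel₀]
  exact_mod_cast hpos.ne'

lemma classWeight_smul_ketbra_classKet (hd : 0 < d) (ν : Fin d → Fin (n + 1)) :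
    (classWeight d n m ν : ℂ) • ketbra (classKet d n m ν) =
      ((d : ℂ) ^ m)⁻¹ • ketbra (classIndicator n ν) := by
  rcases (occClass d n m ν).eq_empty_or_nonempty with hν | hν
  · have hzero : classIndicator (l := m) n ν = 0 := funext fun f ↦ if_neg fun hf ↦
      notMem_empty _ (hν ▸ (occVec_mem_occClass_iff f ν).mpr hf)
    simp [classKet_eq, hzero, ketbra]
  · have hw := classWeight_pos (m := m) hd hν
    have hcoeff : classWeight d n m ν * ((Real.sqrt ((d : ℝ) ^ m * classWeight d n m ν))⁻¹ *
        (Real.sqrt ((d : ℝ) ^ m * classWeight d n m ν))⁻¹) = ((d : ℝ) ^ m)⁻¹ := by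
      rw [← mul_inv, Real.mul_self_sqrt (by positivity)]
      field_simp
    rw [classKet_eq, ketbra_ofReal_smul, smul_smul, ← Complex.ofReal_mul, hcoeff]
    push_cast
    rfl

lemma sum_ketbra_classIndicator_apply (f g : Fin m → Fin d) :
    (∑ ν : Fin d → Fin (n + 1), ketbra (classIndicator n ν)) f g =
      if occMod n f = occMod n g then 1 else 0 := by
  simp only [Matrix.sum_apply, ketbra, vecMulVec_apply, classIndicator, Pi.star_apply,
    apply_ite star, star_one, star_zero, ite_zero_mul_ite_zero, mul_one, ite_and, sum_ite_eq,
    mem_univ, if_true]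
  exact if_congr eq_comm rfl rfl

lemma phase_mixture_eq_sum_classWeight_smul (hd : 0 < d) :
    ((n + 1 : ℂ) ^ d)⁻¹ • ∑ k : Fin d → Fin (n + 1), tpow (ketbra (phaseKet d n k)) m =
      ∑ ν : Fin d → Fin (n + 1), (classWeight d n m ν : ℂ) • ketbra (classKet d n m ν) := by
  simp only [classWeight_smul_ketbra_classKet hd, ← smul_sum]
  ext f g
  rw [Matrix.smul_apply, Matrix.smul_apply, sum_tpow_ketbra_phaseKet_apply,
    sum_ketbra_classIndicator_apply, smul_eq_mul, smul_eq_mul]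
  have : (n + 1 : ℂ) ^ d ≠ 0 := pow_ne_zero _ (Nat.cast_add_one_ne_zero n)
  field_simp

end OccupationClasses

theorem multi_phase_m_fold_decomposition_general
    (d n m : ℕ) (hd : 1 ≤ d)
    -- B ν : the occupation vectors of total weight m in the residue class ν mod (n+1)
    (B : (Fin d → Fin (n + 1)) → Finset (Fin d → Fin (m + 1)))
    (hB : ∀ ν, B ν = Finset.univ.filter (fun β : Fin d → Fin (m + 1) =>
      (∑ i, (β i : ℕ)) = m ∧ ∀ i, (β i : ℕ) % (n + 1) = (ν i : ℕ)))
    -- d_ν = Σ_{β ≡ ν, Σβ = m} m!/(d^m β!)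
    (dν : (Fin d → Fin (n + 1)) → ℝ)
    (hdν : ∀ ν, dν ν = ∑ β ∈ B ν,
      (m.factorial : ℝ) / ((d : ℝ) ^ m * ∏ i, ((β i : ℕ).factorial : ℝ)))
    -- |φ_ν⟩ = (1/√(d^m d_ν)) Σ_{β ≡ ν, Σβ = m} √(m!/β!) |β⟩
    (φν : (Fin d → Fin (n + 1)) → (Fin m → Fin d) → ℂ)
    (hφν : ∀ ν, φν ν = fun f =>
      (((Real.sqrt ((d : ℝ) ^ m * dν ν))⁻¹ : ℝ) : ℂ) * ∑ β ∈ B ν,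
        ((Real.sqrt ((m.factorial : ℝ) / ∏ i, ((β i : ℕ).factorial : ℝ)) : ℝ) : ℂ) *
          occKet d m (fun i => (β i : ℕ)) f) :
    (((n + 1 : ℂ) ^ d)⁻¹ • ∑ k : Fin d → Fin (n + 1), tpow (ketbra (phaseKet d n k)) m
        = ∑ ν : Fin d → Fin (n + 1), (dν ν : ℂ) • ketbra (φν ν)) ∧
    (∀ ν, (B ν).Nonempty → star (φν ν) ⬝ᵥ φν ν = 1) ∧
    (∀ ν ν', ν ≠ ν' → star (φν ν) ⬝ᵥ φν ν' = 0) := by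
  obtain rfl : B = occClass d n m := funext hB
  obtain rfl : dν = classWeight d n m := funext hdν
  obtain rfl : φν = classKet d n m := funext hφν
  exact ⟨phase_mixture_eq_sum_classWeight_smul hd, fun _ ↦ classKet_dotProduct_self hd,
    fun _ _ ↦ classKet_dotProduct_of_ne⟩

/-- the uniform mixture of m-fold tensor powers of the discretized
multi-phase states decomposes as `Σ_ν d_ν |φ_ν⟩⟨φ_ν|` with `|φ_ν⟩` orthonormal. -/
theorem multi_phase_m_fold_decomposition
    (d n m : ℕ) (hd : 1 ≤ d) (hn : 1 ≤ n) (hm : 1 ≤ m)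
    -- B ν : the occupation vectors of total weight m in the residue class ν mod (n+1)
    (B : (Fin d → Fin (n + 1)) → Finset (Fin d → Fin (m + 1)))
    (hB : ∀ ν, B ν = Finset.univ.filter (fun β : Fin d → Fin (m + 1) =>
      (∑ i, (β i : ℕ)) = m ∧ ∀ i, (β i : ℕ) % (n + 1) = (ν i : ℕ)))
    -- d_ν = Σ_{β ≡ ν, Σβ = m} m!/(d^m β!)
    (dν : (Fin d → Fin (n + 1)) → ℝ)
    (hdν : ∀ ν, dν ν = ∑ β ∈ B ν,
      (m.factorial : ℝ) / ((d : ℝ) ^ m * ∏ i, ((β i : ℕ).factorial : ℝ)))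
    -- |φ_ν⟩ = (1/√(d^m d_ν)) Σ_{β ≡ ν, Σβ = m} √(m!/β!) |β⟩
    (φν : (Fin d → Fin (n + 1)) → (Fin m → Fin d) → ℂ)
    (hφν : ∀ ν, φν ν = fun f =>
      (((Real.sqrt ((d : ℝ) ^ m * dν ν))⁻¹ : ℝ) : ℂ) * ∑ β ∈ B ν,
        ((Real.sqrt ((m.factorial : ℝ) / ∏ i, ((β i : ℕ).factorial : ℝ)) : ℝ) : ℂ) *
          occKet d m (fun i => (β i : ℕ)) f) :
    (((n + 1 : ℂ) ^ d)⁻¹ • ∑ k : Fin d → Fin (n + 1), tpow (ketbra (phaseKet d n k)) m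
        = ∑ ν : Fin d → Fin (n + 1), (dν ν : ℂ) • ketbra (φν ν)) ∧
    (∀ ν, (B ν).Nonempty → star (φν ν) ⬝ᵥ φν ν = 1) ∧
    (∀ ν ν', ν ≠ ν' → star (φν ν) ⬝ᵥ φν ν' = 0) :=
  multi_phase_m_fold_decomposition_general d n m hd B hB dν hdν φν hφν
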